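/- Let $f \in L^2(\mathbb{R}^d)$ and for $n \in \mathbb{Z}$ let $E_n f$ denote the conditional expectation of $f$ onto the $\sigma$-algebra generated by dyadic cubes of side length $2^{-n}$, and set $df_n = E_n f - E_{n-1} f$. Let $M_k g(x) = \frac{1}{|B_k|}\int_{B_k} g(x+y)\, dy$ be the averaging operator over the ball $B_k$ of radius $2^{-k}$. Then for all $k \geq n$, $\|M_k (df_n) - df_n\|_{L^2}^2 \leq C_d\, 2^{n-k} \|df_n\|_{L^2}^2$, with $C_d$ depending only on $d$. -/

import Mathlib

/-!
The difference `g = df_n` is constant on the dyadic cubes of side `2^(-n)`. If every coordinate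
of `x` lies at distance at least `2^(-k)` from the dyadic grid of mesh `2^(-n)`, the ball of
radius `2^(-k)` about `x` stays inside the cube of `x` and `M_k g x = g x`. The other points form
a boundary layer of relative width `ε = 2^(n-k)`, on which `|M_k g - g|² ≤ 2 M_k (g²) + 2 g²`.
Since `z ∈ B(x, r) ↔ x ∈ B(z, r)`, Tonelli bounds the integral of `M_k (g²)` over the layer by
the integral of `g²` over the layer of width `2ε`; the same argument with the cubes in place
of the balls shows that, `g²` being constant on cubes, this is at most `4 d ε ‖g‖₂²`, because
the layer of width `2ε` fills a fraction at most `4 d ε` of every cube.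
-/

open MeasureTheory

/-- The dyadic cube of side length `2^(-n)` containing `x`. -/
def dyadicCubeOf (d : ℕ) (n : ℤ) (x : EuclideanSpace ℝ (Fin d)) :
    Set (EuclideanSpace ℝ (Fin d)) :=
  {y | ∀ i, ⌊(2:ℝ) ^ n * y i⌋ = ⌊(2:ℝ) ^ n * x i⌋}

/-- The dyadic conditional expectation at scale `2^(-n)`: the average of `f` over the
dyadic cube of side length `2^(-n)` containing `x`. -/
noncomputable def dyadicCondExp (d : ℕ) (n : ℤ) (f : EuclideanSpace ℝ (Fin d) → ℝ)
    (x : EuclideanSpace ℝ (Fin d)) : ℝ :=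
  ⨍ y in dyadicCubeOf d n x, f y

/-- The martingale difference `df_n = E_n f - E_{n-1} f`. -/
noncomputable def dyadicDiff (d : ℕ) (n : ℤ) (f : EuclideanSpace ℝ (Fin d) → ℝ)
    (x : EuclideanSpace ℝ (Fin d)) : ℝ :=
  dyadicCondExp d n f x - dyadicCondExp d (n - 1) f x

/-- The averaging operator over the ball of radius `2^(-k)`. -/
noncomputable def ballAvg (d : ℕ) (k : ℤ) (g : EuclideanSpace ℝ (Fin d) → ℝ)
    (x : EuclideanSpace ℝ (Fin d)) : ℝ :=
  ⨍ y in Metric.ball x ((2:ℝ) ^ (-k)), g y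

open Metric Set
open scoped ENNReal

section SymmetricRelation

variable {α : Type*} [MeasurableSpace α] {μ : Measure α} [SFinite μ] {A : α → Set α}

theorem setLIntegral_setLIntegral_eq_lintegral_mul_measure_inter
    (hA : MeasurableSet {p : α × α | p.2 ∈ A p.1}) (hsymm : ∀ x z, z ∈ A x → x ∈ A z)
    (S : Set α) {G : α → ℝ≥0∞} (hG : Measurable G) :
    ∫⁻ x in S, ∫⁻ z in A x, G z ∂μ ∂μ = ∫⁻ z, G z * μ (S ∩ A z) ∂μ := by
  have hAz (z : α) : MeasurableSet (A z) := measurable_prodMk_left hA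
  have hswap (x z : α) : (A x).indicator G z = (A z).indicator (fun _ => G z) x := by
    by_cases h : z ∈ A x
    · simp [h, hsymm x z h]
    · rw [indicator_of_notMem h, indicator_of_notMem fun h' => h (hsymm z x h')]
  calc ∫⁻ x in S, ∫⁻ z in A x, G z ∂μ ∂μ
      = ∫⁻ x in S, ∫⁻ z, (A x).indicator G z ∂μ ∂μ := by
        simp_rw [lintegral_indicator (hAz _)]
    _ = ∫⁻ z, ∫⁻ x in S, (A z).indicator (fun _ => G z) x ∂μ ∂μ := by
        have hmeas : Measurable (Function.uncurry fun x z => (A x).indicator G z) :=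
          (hG.comp measurable_snd).indicator hA
        rw [lintegral_lintegral_swap hmeas.aemeasurable]
        exact lintegral_congr fun z => lintegral_congr fun x => hswap x z
    _ = ∫⁻ z, G z * μ (S ∩ A z) ∂μ := by
        refine lintegral_congr fun z => ?_
        rw [lintegral_indicator_const (hAz z), Measure.restrict_apply (hAz z), inter_comm]

theorem setLIntegral_le_of_forall_measure_inter_le
    (hA : MeasurableSet {p : α × α | p.2 ∈ A p.1}) (hsymm : ∀ x z, z ∈ A x → x ∈ A z)
    {w : ℝ≥0∞} (hw0 : w ≠ 0) (hwtop : w ≠ ∞) (hAw : ∀ x, μ (A x) = w)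
    {G : α → ℝ≥0∞} (hG : Measurable G) (hGA : ∀ x, ∀ z ∈ A x, G z = G x)
    {S : Set α} {a : ℝ≥0∞} (hS : ∀ z, μ (S ∩ A z) ≤ a * w) :
    ∫⁻ x in S, G x ∂μ ≤ a * ∫⁻ x, G x ∂μ := by
  have hAz (z : α) : MeasurableSet (A z) := measurable_prodMk_left hA
  have hmean (x : α) : ∫⁻ z in A x, G z ∂μ = G x * w := by
    rw [setLIntegral_congr_fun (hAz x) (hGA x), setLIntegral_const, hAw]
  refine (ENNReal.mul_le_mul_iff_left hw0 hwtop).1 ?_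
  calc (∫⁻ x in S, G x ∂μ) * w = ∫⁻ x in S, ∫⁻ z in A x, G z ∂μ ∂μ := by
        simp_rw [hmean, lintegral_mul_const _ hG]
    _ = ∫⁻ z, G z * μ (S ∩ A z) ∂μ :=
        setLIntegral_setLIntegral_eq_lintegral_mul_measure_inter hA hsymm S hG
    _ ≤ ∫⁻ z, G z * (a * w) ∂μ := lintegral_mono fun z => by gcongr; exact hS z
    _ = a * (∫⁻ x, G x ∂μ) * w := by rw [lintegral_mul_const _ hG]; ring

end SymmetricRelation

theorem setLIntegral_setLIntegral_ball_le {α : Type*} [PseudoMetricSpace α]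
    [SecondCountableTopology α] [MeasurableSpace α] [OpensMeasurableSpace α]
    {μ : Measure α} [SFinite μ] {r : ℝ} {v : ℝ≥0∞} (hv : ∀ z, μ (ball z r) ≤ v)
    (S : Set α) {G : α → ℝ≥0∞} (hG : Measurable G) :
    ∫⁻ x in S, ∫⁻ z in ball x r, G z ∂μ ∂μ ≤ v * ∫⁻ z in thickening r S, G z ∂μ := by
  have hrel : MeasurableSet {p : α × α | p.2 ∈ ball p.1 r} :=
    measurableSet_lt (measurable_snd.dist measurable_fst) measurable_const
  have hbound (z : α) :
      G z * μ (S ∩ ball z r) ≤ (thickening r S).indicator (fun z => v * G z) z := by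
    by_cases hz : z ∈ thickening r S
    · rw [indicator_of_mem hz, mul_comm]
      gcongr
      exact (measure_mono inter_subset_right).trans (hv z)
    · have hempty : S ∩ ball z r = ∅ :=
        eq_empty_of_forall_notMem fun x hx =>
          hz (mem_thickening_iff.2 ⟨x, hx.1, mem_ball'.1 hx.2⟩)
      simp [hempty]
  calc ∫⁻ x in S, ∫⁻ z in ball x r, G z ∂μ ∂μ = ∫⁻ z, G z * μ (S ∩ ball z r) ∂μ :=
        setLIntegral_setLIntegral_eq_lintegral_mul_measure_inter hrel
          (fun x z h => mem_ball_comm.1 h) S hG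
    _ ≤ ∫⁻ z, (thickening r S).indicator (fun z => v * G z) z ∂μ := lintegral_mono hbound
    _ = v * ∫⁻ z in thickening r S, G z ∂μ := by
        rw [lintegral_indicator isOpen_thickening.measurableSet, lintegral_const_mul _ hG]

theorem ofReal_sq_setAverage_le {α : Type*} [MeasurableSpace α] {μ : Measure α} {s : Set α}
    (h0 : μ s ≠ 0) (htop : μ s ≠ ∞) {g : α → ℝ} (hg : MemLp g 2 (μ.restrict s)) :
    ENNReal.ofReal ((⨍ y in s, g y ∂μ) ^ 2) ≤ (μ s)⁻¹ * ∫⁻ y in s, ENNReal.ofReal (g y ^ 2) ∂μ := by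
  have := Fact.mk htop.lt_top
  have hjensen : (⨍ y in s, g y ∂μ) ^ 2 ≤ ⨍ y in s, g y ^ 2 ∂μ :=
    (even_two.convexOn_pow).map_set_average_le (continuous_pow 2).continuousOn isClosed_univ h0
      htop (.of_forall fun _ => mem_univ _) (hg.integrable one_le_two) hg.integrable_sq
  refine (ENNReal.ofReal_le_ofReal hjensen).trans_eq ?_
  rw [setAverage_eq, smul_eq_mul, ENNReal.ofReal_mul (by positivity), measureReal_def,
    ← ENNReal.toReal_inv,
    ENNReal.ofReal_toReal (ENNReal.inv_ne_top.2 h0),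
    ofReal_integral_eq_lintegral_ofReal hg.integrable_sq (.of_forall fun _ => sq_nonneg _)]

theorem eLpNorm_two_sq {α : Type*} [MeasurableSpace α] (μ : Measure α) (h : α → ℝ) :
    eLpNorm h 2 μ ^ 2 = ∫⁻ x, ENNReal.ofReal (h x ^ 2) ∂μ := by
  have := eLpNorm_nnreal_pow_eq_lintegral (μ := μ) (f := h) (p := 2) two_ne_zero
  simp only [ENNReal.coe_ofNat, NNReal.coe_ofNat, ENNReal.rpow_two] at this
  rw [this]
  refine lintegral_congr fun x => ?_
  rw [Real.enorm_eq_ofReal_abs, ← ENNReal.ofReal_pow (abs_nonneg _), sq_abs]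

namespace Real

theorem volume_setOf_floor_mul_eq {s : ℝ} (hs : 0 < s) (m : ℤ) :
    volume {t : ℝ | ⌊s * t⌋ = m} = ENNReal.ofReal s⁻¹ := by
  have : {t : ℝ | ⌊s * t⌋ = m} = (s * ·) ⁻¹' (Int.floor ⁻¹' {m}) := rfl
  rw [this, Int.preimage_floor_singleton, volume_preimage_mul_left hs.ne', volume_Ico,
    add_sub_cancel_left, ENNReal.ofReal_one, mul_one, abs_of_pos (inv_pos.2 hs)]

theorem volume_setOf_floor_mul_eq_inter_le {s : ℝ} (hs : 0 < s) (m : ℤ) (c : ℝ) :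
    volume ({t : ℝ | ⌊s * t⌋ = m} ∩ {t | ∃ m' : ℤ, |s * t - m'| < c}) ≤
      2 * ENNReal.ofReal c * volume {t : ℝ | ⌊s * t⌋ = m} := by
  have hsub : {u : ℝ | ⌊u⌋ = m} ∩ {u | ∃ m' : ℤ, |u - m'| < c} ⊆
      Ico (m : ℝ) (m + c) ∪ Ioo (m + 1 - c : ℝ) (m + 1) := by
    rintro u ⟨hu, m', hm'⟩
    replace hu := Int.floor_eq_iff.1 hu
    rw [abs_lt] at hm'
    rcases le_or_gt m' m with h | h
    · have : (m' : ℝ) ≤ m := by exact_mod_cast h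
      exact Or.inl ⟨hu.1, by linarith⟩
    · have : (m : ℝ) + 1 ≤ m' := by exact_mod_cast h
      exact Or.inr ⟨by linarith, hu.2⟩
  have hpre : {t : ℝ | ⌊s * t⌋ = m} ∩ {t | ∃ m' : ℤ, |s * t - m'| < c} =
      (s * ·) ⁻¹' ({u : ℝ | ⌊u⌋ = m} ∩ {u | ∃ m' : ℤ, |u - m'| < c}) := rfl
  calc volume ({t : ℝ | ⌊s * t⌋ = m} ∩ {t | ∃ m' : ℤ, |s * t - m'| < c})
      ≤ ENNReal.ofReal |s⁻¹| * volume (Ico (m : ℝ) (m + c) ∪ Ioo (m + 1 - c : ℝ) (m + 1)) := by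
        rw [hpre, volume_preimage_mul_left hs.ne']
        gcongr
    _ ≤ ENNReal.ofReal s⁻¹ * (ENNReal.ofReal c + ENNReal.ofReal c) := by
        rw [abs_of_pos (inv_pos.2 hs)]
        gcongr
        refine (measure_union_le _ _).trans_eq ?_
        rw [volume_Ico, volume_Ioo, add_sub_cancel_left, sub_sub_cancel]
    _ = 2 * ENNReal.ofReal c * volume {t : ℝ | ⌊s * t⌋ = m} := by
        rw [volume_setOf_floor_mul_eq hs]
        ring

end Real

theorem EuclideanSpace.volume_setOf_forall_mem {ι : Type*} [Fintype ι] {S : ι → Set ℝ}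
    (hS : ∀ i, MeasurableSet (S i)) :
    volume {y : EuclideanSpace ℝ ι | ∀ i, y i ∈ S i} = ∏ i, volume (S i) := by
  have h : {y : EuclideanSpace ℝ ι | ∀ i, y i ∈ S i} =
      (MeasurableEquiv.toLp 2 (ι → ℝ)).symm ⁻¹' univ.pi S := by
    ext y
    simp
  rw [h, (EuclideanSpace.volume_preserving_symm_measurableEquiv_toLp ι).measure_preimage
    (MeasurableSet.univ_pi hS).nullMeasurableSet, volume_pi_pi]

section Dyadic

variable {d : ℕ} {n : ℤ}

noncomputable def dyadicIndex (d : ℕ) (n : ℤ) (x : EuclideanSpace ℝ (Fin d)) : Fin d → ℤ :=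
  fun i => ⌊(2:ℝ) ^ n * x i⌋

theorem measurable_dyadicIndex : Measurable (dyadicIndex d n) :=
  measurable_pi_lambda _ fun i =>
    Int.measurable_floor.comp (measurable_const.mul (EuclideanSpace.proj i).continuous.measurable)

theorem dyadicCubeOf_eq_preimage (x : EuclideanSpace ℝ (Fin d)) :
    dyadicCubeOf d n x = dyadicIndex d n ⁻¹' {dyadicIndex d n x} := by
  ext y
  simp [dyadicCubeOf, dyadicIndex, funext_iff]

theorem mem_dyadicCubeOf_comm {x y : EuclideanSpace ℝ (Fin d)} :
    y ∈ dyadicCubeOf d n x ↔ x ∈ dyadicCubeOf d n y := by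
  simp only [dyadicCubeOf_eq_preimage, mem_preimage, mem_singleton_iff, eq_comm]

theorem dyadicCubeOf_eq_of_mem {x y : EuclideanSpace ℝ (Fin d)} (h : y ∈ dyadicCubeOf d n x) :
    dyadicCubeOf d n y = dyadicCubeOf d n x := by
  rw [dyadicCubeOf_eq_preimage] at h
  rw [dyadicCubeOf_eq_preimage, dyadicCubeOf_eq_preimage, h]

theorem mem_dyadicCubeOf_sub_one {x y : EuclideanSpace ℝ (Fin d)} (h : y ∈ dyadicCubeOf d n x) :
    y ∈ dyadicCubeOf d (n - 1) x := by
  intro i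
  have hhalf (t : ℝ) : (2:ℝ) ^ (n - 1) * t = (2:ℝ) ^ n * t / (2 : ℕ) := by
    rw [zpow_sub₀ two_ne_zero]
    push_cast
    ring
  rw [hhalf, hhalf, Int.floor_div_natCast, Int.floor_div_natCast, h i]

theorem dyadicDiff_eq_of_mem (f : EuclideanSpace ℝ (Fin d) → ℝ) {x y : EuclideanSpace ℝ (Fin d)}
    (h : y ∈ dyadicCubeOf d n x) : dyadicDiff d n f y = dyadicDiff d n f x := by
  simp only [dyadicDiff, dyadicCondExp, dyadicCubeOf_eq_of_mem h,
    dyadicCubeOf_eq_of_mem (mem_dyadicCubeOf_sub_one h)]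

theorem measurableSet_setOf_mem_dyadicCubeOf :
    MeasurableSet {p : EuclideanSpace ℝ (Fin d) × EuclideanSpace ℝ (Fin d) |
      p.2 ∈ dyadicCubeOf d n p.1} := by
  simp only [dyadicCubeOf_eq_preimage, mem_preimage, mem_singleton_iff]
  exact measurableSet_eq_fun (measurable_dyadicIndex.comp measurable_snd)
    (measurable_dyadicIndex.comp measurable_fst)

theorem measurable_dyadicDiff (f : EuclideanSpace ℝ (Fin d) → ℝ) :
    Measurable (dyadicDiff d n f) := by
  have hcond (n : ℤ) : Measurable (dyadicCondExp d n f) := by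
    have : dyadicCondExp d n f =
        (fun m => ⨍ y in dyadicIndex d n ⁻¹' {m}, f y) ∘ dyadicIndex d n := by
      ext x
      simp only [dyadicCondExp, dyadicCubeOf_eq_preimage, Function.comp_apply]
    rw [this]
    exact (measurable_of_countable _).comp measurable_dyadicIndex
  exact (hcond n).sub (hcond (n - 1))

theorem volume_dyadicCubeOf (x : EuclideanSpace ℝ (Fin d)) :
    volume (dyadicCubeOf d n x) = ENNReal.ofReal ((2:ℝ) ^ n)⁻¹ ^ d := by
  have hS (i : Fin d) : MeasurableSet {t : ℝ | ⌊(2:ℝ) ^ n * t⌋ = ⌊(2:ℝ) ^ n * x i⌋} :=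
    measurableSet_eq_fun (Int.measurable_floor.comp (measurable_const_mul _)) measurable_const
  refine (EuclideanSpace.volume_setOf_forall_mem hS).trans ?_
  simp [Real.volume_setOf_floor_mul_eq (zpow_pos two_pos n)]

def dyadicBoundaryLayer (d : ℕ) (n : ℤ) (c : ℝ) : Set (EuclideanSpace ℝ (Fin d)) :=
  {x | ∃ i, ∃ m : ℤ, |(2:ℝ) ^ n * x i - m| < c}

theorem measurableSet_dyadicBoundaryLayer (c : ℝ) :
    MeasurableSet (dyadicBoundaryLayer d n c) := by
  have : IsOpen (dyadicBoundaryLayer d n c) := by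
    simp only [dyadicBoundaryLayer, ofPred_exists]
    exact isOpen_iUnion fun i => isOpen_iUnion fun m =>
      isOpen_lt (by fun_prop) continuous_const
  exact this.measurableSet

theorem abs_two_zpow_mul_apply_sub_le_dist (n : ℤ) (x y : EuclideanSpace ℝ (Fin d)) (i : Fin d) :
    |(2:ℝ) ^ n * y i - (2:ℝ) ^ n * x i| ≤ (2:ℝ) ^ n * dist y x := by
  rw [← mul_sub, abs_mul, abs_of_pos (zpow_pos two_pos n), ← Real.dist_eq]
  gcongr
  exact PiLp.dist_apply_le y x i

theorem mem_dyadicCubeOf_of_notMem_dyadicBoundaryLayer {c : ℝ} {x y : EuclideanSpace ℝ (Fin d)}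
    (hx : x ∉ dyadicBoundaryLayer d n c) (hxy : (2:ℝ) ^ n * dist y x < c) :
    y ∈ dyadicCubeOf d n x := by
  intro i
  have hfar : ∀ m : ℤ, c ≤ |(2:ℝ) ^ n * x i - m| := by
    simpa [dyadicBoundaryLayer] using fun m => hx ⟨i, m⟩
  have hfloor := hfar ⌊(2:ℝ) ^ n * x i⌋
  have hceil := hfar (⌊(2:ℝ) ^ n * x i⌋ + 1)
  have hclose := (abs_two_zpow_mul_apply_sub_le_dist n x y i).trans_lt hxy
  have := Int.floor_le ((2:ℝ) ^ n * x i)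
  have := Int.lt_floor_add_one ((2:ℝ) ^ n * x i)
  rw [le_abs] at hfloor hceil
  rw [abs_lt] at hclose
  push_cast at hceil
  rw [Int.floor_eq_iff]
  rcases hfloor with _ | _ <;> rcases hceil with _ | _ <;> constructor <;> linarith

theorem thickening_dyadicBoundaryLayer_subset (c r : ℝ) :
    thickening r (dyadicBoundaryLayer d n c) ⊆ dyadicBoundaryLayer d n (c + (2:ℝ) ^ n * r) := by
  intro z hz
  obtain ⟨x, ⟨i, m, hm⟩, hzx⟩ := mem_thickening_iff.1 hz
  refine ⟨i, m, ?_⟩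
  have hclose := abs_two_zpow_mul_apply_sub_le_dist n x z i
  have : (2:ℝ) ^ n * dist z x < (2:ℝ) ^ n * r := by gcongr
  calc |(2:ℝ) ^ n * z i - m| ≤ |(2:ℝ) ^ n * z i - (2:ℝ) ^ n * x i| + |(2:ℝ) ^ n * x i - m| :=
        abs_sub_le _ _ _
    _ < c + (2:ℝ) ^ n * r := by linarith

theorem volume_dyadicBoundaryLayer_inter_dyadicCubeOf_le (c : ℝ) (x : EuclideanSpace ℝ (Fin d)) :
    volume (dyadicBoundaryLayer d n c ∩ dyadicCubeOf d n x) ≤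
      2 * d * ENNReal.ofReal c * volume (dyadicCubeOf d n x) := by
  set S : Fin d → Set ℝ := fun j => {t | ⌊(2:ℝ) ^ n * t⌋ = ⌊(2:ℝ) ^ n * x j⌋}
  set N : Set ℝ := {t | ∃ m : ℤ, |(2:ℝ) ^ n * t - m| < c}
  have hS (j : Fin d) : MeasurableSet (S j) :=
    measurableSet_eq_fun (Int.measurable_floor.comp (measurable_const_mul _)) measurable_const
  have hN : MeasurableSet N := by
    simp only [N, ofPred_exists]
    exact (isOpen_iUnion fun m => isOpen_lt (by fun_prop) continuous_const).measurableSet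
  have hcube : volume (dyadicCubeOf d n x) = ∏ j, volume (S j) :=
    EuclideanSpace.volume_setOf_forall_mem hS
  have hsub : dyadicBoundaryLayer d n c ∩ dyadicCubeOf d n x ⊆
      ⋃ i, {y : EuclideanSpace ℝ (Fin d) | ∀ j, y j ∈ Function.update S i (S i ∩ N) j} := by
    rintro y ⟨⟨i, m, hm⟩, hy⟩
    refine mem_iUnion.2 ⟨i, fun j => ?_⟩
    rcases eq_or_ne j i with rfl | hji
    · rw [Function.update_self]
      exact ⟨hy j, m, hm⟩
    · rw [Function.update_of_ne hji]
      exact hy j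
  have hpiece (i : Fin d) :
      volume {y : EuclideanSpace ℝ (Fin d) | ∀ j, y j ∈ Function.update S i (S i ∩ N) j} ≤
        2 * ENNReal.ofReal c * volume (dyadicCubeOf d n x) := by
    have hmeas (j : Fin d) : MeasurableSet (Function.update S i (S i ∩ N) j) := by
      rcases eq_or_ne j i with rfl | hji
      · simpa using (hS j).inter hN
      · simpa [hji] using hS j
    have hupdate (j : Fin d) : volume (Function.update S i (S i ∩ N) j) =
        Function.update (fun j => volume (S j)) i (volume (S i ∩ N)) j :=
      Function.apply_update (fun _ => volume) S i _ j
    rw [EuclideanSpace.volume_setOf_forall_mem hmeas, hcube,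
      Finset.prod_congr rfl fun j _ => hupdate j, Finset.prod_update_of_mem (Finset.mem_univ i),
      Finset.prod_eq_mul_prod_sdiff_singleton_of_mem (Finset.mem_univ i), ← mul_assoc]
    gcongr
    exact Real.volume_setOf_floor_mul_eq_inter_le (zpow_pos two_pos n) _ c
  calc volume (dyadicBoundaryLayer d n c ∩ dyadicCubeOf d n x)
      ≤ ∑ i, volume {y : EuclideanSpace ℝ (Fin d) | ∀ j, y j ∈ Function.update S i (S i ∩ N) j} :=
        (measure_mono hsub).trans (measure_iUnion_fintype_le _ _)
    _ ≤ ∑ _i : Fin d, 2 * ENNReal.ofReal c * volume (dyadicCubeOf d n x) :=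
        Finset.sum_le_sum fun i _ => hpiece i
    _ = 2 * d * ENNReal.ofReal c * volume (dyadicCubeOf d n x) := by
        rw [Finset.sum_const, Finset.card_univ, Fintype.card_fin, nsmul_eq_mul]
        ring

theorem setLIntegral_dyadicBoundaryLayer_le {G : EuclideanSpace ℝ (Fin d) → ℝ≥0∞}
    (hG : Measurable G) (hGc : ∀ x, ∀ y ∈ dyadicCubeOf d n x, G y = G x) (c : ℝ) :
    ∫⁻ x in dyadicBoundaryLayer d n c, G x ≤ 2 * d * ENNReal.ofReal c * ∫⁻ x, G x := by
  have hw0 : ENNReal.ofReal ((2:ℝ) ^ n)⁻¹ ^ d ≠ 0 := by simp [zpow_pos (two_pos : (0:ℝ) < 2) n]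
  have hwtop : ENNReal.ofReal ((2:ℝ) ^ n)⁻¹ ^ d ≠ ∞ := by simp
  refine setLIntegral_le_of_forall_measure_inter_le measurableSet_setOf_mem_dyadicCubeOf
    (fun _ _ => mem_dyadicCubeOf_comm.1) hw0 hwtop volume_dyadicCubeOf hG hGc fun z => ?_
  rw [← volume_dyadicCubeOf z]
  exact volume_dyadicBoundaryLayer_inter_dyadicCubeOf_le c z

section BallAverage

variable {g : EuclideanSpace ℝ (Fin d) → ℝ}

theorem ballAvg_eq_self_of_notMem_dyadicBoundaryLayer
    (hg : ∀ x, ∀ y ∈ dyadicCubeOf d n x, g y = g x) {k : ℤ} {x : EuclideanSpace ℝ (Fin d)}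
    (hx : x ∉ dyadicBoundaryLayer d n ((2:ℝ) ^ n * (2:ℝ) ^ (-k))) : ballAvg d k g x = g x := by
  have hr : (0:ℝ) < (2:ℝ) ^ (-k) := zpow_pos two_pos _
  have hball : ∀ y ∈ ball x ((2:ℝ) ^ (-k)), g y = g x := fun y hy =>
    hg x y (mem_dyadicCubeOf_of_notMem_dyadicBoundaryLayer hx
      (mul_lt_mul_of_pos_left (mem_ball.1 hy) (zpow_pos two_pos n)))
  rw [ballAvg, setAverage_congr_fun measurableSet_ball (.of_forall hball),
    setAverage_const (measure_ball_pos volume x hr).ne' measure_ball_lt_top.ne]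

theorem ofReal_sq_ballAvg_sub_le (hg : ∀ x, ∀ y ∈ dyadicCubeOf d n x, g y = g x)
    (hg2 : MemLp g 2 volume) (k : ℤ) (x : EuclideanSpace ℝ (Fin d)) :
    ENNReal.ofReal ((ballAvg d k g x - g x) ^ 2) ≤
      (dyadicBoundaryLayer d n ((2:ℝ) ^ n * (2:ℝ) ^ (-k))).indicator
        (fun x => 2 * ((volume (ball x ((2:ℝ) ^ (-k))))⁻¹ *
          ∫⁻ z in ball x ((2:ℝ) ^ (-k)), ENNReal.ofReal (g z ^ 2)) +
          2 * ENNReal.ofReal (g x ^ 2)) x := by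
  by_cases hx : x ∈ dyadicBoundaryLayer d n ((2:ℝ) ^ n * (2:ℝ) ^ (-k))
  · rw [indicator_of_mem hx]
    have hjensen := ofReal_sq_setAverage_le
      (measure_ball_pos volume x (zpow_pos two_pos (-k))).ne' measure_ball_lt_top.ne
      (hg2.restrict _)
    calc ENNReal.ofReal ((ballAvg d k g x - g x) ^ 2)
        ≤ ENNReal.ofReal (2 * ballAvg d k g x ^ 2 + 2 * g x ^ 2) :=
          ENNReal.ofReal_le_ofReal (by nlinarith [sq_nonneg (ballAvg d k g x + g x)])
      _ ≤ 2 * ENNReal.ofReal (ballAvg d k g x ^ 2) + 2 * ENNReal.ofReal (g x ^ 2) := by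
          refine ENNReal.ofReal_add_le.trans_eq ?_
          rw [ENNReal.ofReal_mul zero_le_two, ENNReal.ofReal_mul zero_le_two, ENNReal.ofReal_ofNat]
      _ ≤ _ := by gcongr; exact hjensen
  · rw [indicator_of_notMem hx, ballAvg_eq_self_of_notMem_dyadicBoundaryLayer hg hx, sub_self]
    simp

theorem lintegral_sq_ballAvg_sub_le (hg : ∀ x, ∀ y ∈ dyadicCubeOf d n x, g y = g x)
    (hgm : Measurable g) (hg2 : MemLp g 2 volume) (k : ℤ) :
    ∫⁻ x, ENNReal.ofReal ((ballAvg d k g x - g x) ^ 2) ≤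
      4 * ∫⁻ x in dyadicBoundaryLayer d n (2 * ((2:ℝ) ^ n * (2:ℝ) ^ (-k))),
        ENNReal.ofReal (g x ^ 2) := by
  have hpt := ofReal_sq_ballAvg_sub_le hg hg2 k
  set r : ℝ := (2:ℝ) ^ (-k)
  set ε : ℝ := (2:ℝ) ^ n * r
  set G : EuclideanSpace ℝ (Fin d) → ℝ≥0∞ := fun x => ENNReal.ofReal (g x ^ 2)
  set v := volume (ball (0 : EuclideanSpace ℝ (Fin d)) r)
  have hr : 0 < r := zpow_pos two_pos _
  have hG : Measurable G := ENNReal.measurable_ofReal.comp (hgm.pow_const 2)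
  have hv (x : EuclideanSpace ℝ (Fin d)) : volume (ball x r) = v :=
    Measure.addHaar_ball_center _ x r
  simp only [hv] at hpt
  have hv0 : v ≠ 0 := (measure_ball_pos volume 0 hr).ne'
  have hvtop : v ≠ ∞ := measure_ball_lt_top.ne
  have hthick : thickening r (dyadicBoundaryLayer d n ε) ⊆ dyadicBoundaryLayer d n (2 * ε) := by
    rw [two_mul]
    exact thickening_dyadicBoundaryLayer_subset ε r
  have hsub : dyadicBoundaryLayer d n ε ⊆ dyadicBoundaryLayer d n (2 * ε) :=
    (self_subset_thickening hr _).trans hthick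
  calc ∫⁻ x, ENNReal.ofReal ((ballAvg d k g x - g x) ^ 2)
      ≤ ∫⁻ x in dyadicBoundaryLayer d n ε, 2 * (v⁻¹ * ∫⁻ z in ball x r, G z) + 2 * G x := by
        rw [← lintegral_indicator (measurableSet_dyadicBoundaryLayer ε)]
        exact lintegral_mono hpt
    _ = 2 * v⁻¹ * (∫⁻ x in dyadicBoundaryLayer d n ε, ∫⁻ z in ball x r, G z) +
          2 * ∫⁻ x in dyadicBoundaryLayer d n ε, G x := by
        rw [lintegral_add_right _ (hG.const_mul 2), lintegral_const_mul _ hG,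
          ← lintegral_const_mul' _ _
            (ENNReal.mul_ne_top ENNReal.ofNat_ne_top (ENNReal.inv_ne_top.2 hv0))]
        simp only [mul_assoc]
    _ ≤ 2 * v⁻¹ * (v * ∫⁻ z in dyadicBoundaryLayer d n (2 * ε), G z) +
          2 * ∫⁻ x in dyadicBoundaryLayer d n (2 * ε), G x := by
        gcongr
        exact (setLIntegral_setLIntegral_ball_le (fun z => (hv z).le) _ hG).trans (by gcongr)
    _ = 4 * ∫⁻ x in dyadicBoundaryLayer d n (2 * ε), G x := by
        rw [← mul_assoc, mul_assoc 2, ENNReal.inv_mul_cancel hv0 hvtop, mul_one]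
        ring

theorem eLpNorm_ballAvg_sub_sq_le (hg : ∀ x, ∀ y ∈ dyadicCubeOf d n x, g y = g x)
    (hgm : Measurable g) (hg2 : MemLp g 2 volume) (k : ℤ) :
    eLpNorm (fun x => ballAvg d k g x - g x) 2 volume ^ 2 ≤
      16 * d * ENNReal.ofReal ((2:ℝ) ^ (n - k)) * eLpNorm g 2 volume ^ 2 := by
  have hscale : (2:ℝ) ^ n * (2:ℝ) ^ (-k) = (2:ℝ) ^ (n - k) := by
    rw [← zpow_add₀ two_ne_zero, sub_eq_add_neg]
  have hG : Measurable fun x => ENNReal.ofReal (g x ^ 2) :=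
    ENNReal.measurable_ofReal.comp (hgm.pow_const 2)
  rw [eLpNorm_two_sq, eLpNorm_two_sq]
  calc _ ≤ 4 * ∫⁻ x in dyadicBoundaryLayer d n (2 * (2:ℝ) ^ (n - k)), ENNReal.ofReal (g x ^ 2) := by
        simpa only [hscale] using lintegral_sq_ballAvg_sub_le hg hgm hg2 k
    _ ≤ 4 * (2 * d * ENNReal.ofReal (2 * (2:ℝ) ^ (n - k)) * ∫⁻ x, ENNReal.ofReal (g x ^ 2)) := by
        gcongr
        exact setLIntegral_dyadicBoundaryLayer_le hG
          (fun x y hy => congrArg (fun t => ENNReal.ofReal (t ^ 2)) (hg x y hy)) _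
    _ = 16 * d * ENNReal.ofReal ((2:ℝ) ^ (n - k)) * ∫⁻ x, ENNReal.ofReal (g x ^ 2) := by
        rw [ENNReal.ofReal_mul zero_le_two, ENNReal.ofReal_ofNat]
        ring

end BallAverage

end Dyadic

/-- For `k ≥ n`, `‖M_k(df_n) - df_n‖₂² ≤ C_d 2^{n-k} ‖df_n‖₂²`. -/
theorem ballAvg_martingale_diff_near_diagonal (d : ℕ) :
    ∃ C : ℝ, 0 < C ∧ ∀ (f : EuclideanSpace ℝ (Fin d) → ℝ), MemLp f 2 volume →
      ∀ (n k : ℤ), n ≤ k →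
      eLpNorm (fun x => ballAvg d k (dyadicDiff d n f) x - dyadicDiff d n f x) 2 volume ^ 2
        ≤ ENNReal.ofReal (C * (2:ℝ) ^ (n - k)) *
            eLpNorm (dyadicDiff d n f) 2 volume ^ 2 := by
  refine ⟨16 * (d + 1), by positivity, fun f _ n k _ => ?_⟩
  by_cases htop : eLpNorm (dyadicDiff d n f) 2 volume = ∞
  · have : ENNReal.ofReal (16 * (d + 1) * (2:ℝ) ^ (n - k)) ≠ 0 := by positivity
    simp [htop, ENNReal.mul_top this]
  have hgm := measurable_dyadicDiff (n := n) f
  refine (eLpNorm_ballAvg_sub_sq_le (fun _ _ => dyadicDiff_eq_of_mem f) hgm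
    ⟨hgm.aestronglyMeasurable, lt_top_iff_ne_top.2 htop⟩ k).trans ?_
  gcongr
  rw [← ENNReal.ofReal_natCast, ← ENNReal.ofReal_ofNat, ← ENNReal.ofReal_mul (by norm_num),
    ← ENNReal.ofReal_mul (by positivity)]
  exact ENNReal.ofReal_le_ofReal (by gcongr; linarith)
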